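/- arXiv:math-ph/0508030 — 2 statements merged into one kernel-verified Lean document; each statement's English description precedes it below -/
import Mathlib

section
/- Let k_F > 0, δ ∈ (0, k_F), and let f̃ : [k_F − δ, k_F + δ] → ℂ be continuously differentiable. Then the integrals ∫_{k_F−δ}^{k_F+δ} f̃(ρ)/(ρ² − (k_F + iμ)²) dρ are bounded uniformly in μ > 0: there is a constant C (depending on k_F, δ, and on sup|f̃| and sup|f̃'|) such that |∫_{k_F−δ}^{k_F+δ} f̃(ρ) dρ/(ρ² − (k_F + iμ)²)| ≤ C for all μ > 0. -/
open MeasureTheory intervalIntegral Set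

/-!
Write `z = k_F + iμ`. Subtracting `f k_F` splits the integrand into `(f ρ - f k_F) / (ρ² - z²)`,
which is bounded by `K / k_F` for a Lipschitz constant `K` of `f` because
`‖ρ² - z²‖ ≥ |ρ - k_F| k_F`, and `f k_F / (ρ² - z²) = f k_F / (2z) ((ρ - z)⁻¹ - (ρ + z)⁻¹)`.
Since `Re z` is the midpoint of the interval, `∫ (ρ - z)⁻¹ = log (δ - iμ) - log (-δ - iμ)` is a
difference of arguments, at most `2π` in modulus; and `‖(ρ + z)⁻¹‖ ≤ 1 / k_F` because `ρ ≥ 0`.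
-/

theorem ContDiffOn.exists_lipschitzOnWith_of_isCompact {E F : Type*}
    [NormedAddCommGroup E] [NormedSpace ℝ E] [NormedAddCommGroup F] [NormedSpace ℝ F]
    {f : E → F} {s : Set E} (hf : ContDiffOn ℝ 1 f s) (hconv : Convex ℝ s) (hcomp : IsCompact s)
    (hs : UniqueDiffOn ℝ s) : ∃ K, LipschitzOnWith K f s := by
  obtain ⟨C, hC⟩ := hcomp.exists_bound_of_continuousOn (hf.continuousOn_fderivWithin hs le_rfl)
  refine ⟨C.toNNReal, hconv.lipschitzOnWith_of_nnnorm_hasFDerivWithin_le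
    (fun x hx ↦ (hf.differentiableOn one_ne_zero x hx).hasFDerivWithinAt) fun x hx ↦ ?_⟩
  rw [← NNReal.coe_le_coe, coe_nnnorm]
  exact (hC x hx).trans (le_max_left _ _)

namespace Complex

open Real

theorem norm_log_sub_log_le_of_norm_eq {a b : ℂ} (h : ‖a‖ = ‖b‖) : ‖log a - log b‖ ≤ 2 * π := by
  have hre : (log a - log b).re = 0 := by simp [log_re, h]
  calc ‖log a - log b‖ = |arg a - arg b| := by rw [← abs_im_eq_norm.mpr hre]; simp [log_im]
    _ ≤ |arg a| + |arg b| := abs_sub _ _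
    _ ≤ 2 * π := by linarith [abs_arg_le_pi a, abs_arg_le_pi b]

theorem ofReal_sub_ne_zero_of_im_ne_zero {z : ℂ} (hz : z.im ≠ 0) (ρ : ℝ) : (ρ : ℂ) - z ≠ 0 :=
  fun h ↦ hz (by simpa using congrArg im h)

theorem ofReal_add_ne_zero_of_im_ne_zero {z : ℂ} (hz : z.im ≠ 0) (ρ : ℝ) : (ρ : ℂ) + z ≠ 0 :=
  fun h ↦ hz (by simpa using congrArg im h)

theorem ofReal_sq_sub_sq_ne_zero_of_im_ne_zero {z : ℂ} (hz : z.im ≠ 0) (ρ : ℝ) :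
    (ρ : ℂ) ^ 2 - z ^ 2 ≠ 0 := by
  rw [sq_sub_sq]
  exact mul_ne_zero (ofReal_add_ne_zero_of_im_ne_zero hz ρ) (ofReal_sub_ne_zero_of_im_ne_zero hz ρ)

theorem inv_ofReal_sq_sub_sq {z : ℂ} (hz : z.im ≠ 0) (ρ : ℝ) :
    ((ρ : ℂ) ^ 2 - z ^ 2)⁻¹ = (2 * z)⁻¹ * (((ρ : ℂ) - z)⁻¹ - ((ρ : ℂ) + z)⁻¹) := by
  have hz0 : z ≠ 0 := fun h ↦ hz (by simp [h])
  rw [inv_sub_inv (ofReal_sub_ne_zero_of_im_ne_zero hz ρ)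
    (ofReal_add_ne_zero_of_im_ne_zero hz ρ), sq_sub_sq]
  field_simp
  ring

theorem continuous_inv_ofReal_sub {z : ℂ} (hz : z.im ≠ 0) :
    Continuous fun ρ : ℝ ↦ ((ρ : ℂ) - z)⁻¹ :=
  (continuous_ofReal.sub continuous_const).inv₀ (ofReal_sub_ne_zero_of_im_ne_zero hz)

theorem continuous_inv_ofReal_add {z : ℂ} (hz : z.im ≠ 0) :
    Continuous fun ρ : ℝ ↦ ((ρ : ℂ) + z)⁻¹ :=
  (continuous_ofReal.add continuous_const).inv₀ (ofReal_add_ne_zero_of_im_ne_zero hz)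

theorem re_le_norm_ofReal_add {z : ℂ} (hz : 0 ≤ z.re) {ρ : ℝ} (hρ : 0 ≤ ρ) :
    z.re ≤ ‖(ρ : ℂ) + z‖ :=
  calc z.re ≤ |((ρ : ℂ) + z).re| := by
        simp only [add_re, ofReal_re]
        rw [abs_of_nonneg] <;> linarith
    _ ≤ ‖(ρ : ℂ) + z‖ := abs_re_le_norm _

theorem abs_sub_re_mul_re_le_norm_ofReal_sq_sub_sq {z : ℂ} (hz : 0 ≤ z.re) {ρ : ℝ} (hρ : 0 ≤ ρ) :
    |ρ - z.re| * z.re ≤ ‖(ρ : ℂ) ^ 2 - z ^ 2‖ := by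
  rw [sq_sub_sq, norm_mul, mul_comm]
  refine mul_le_mul (re_le_norm_ofReal_add hz hρ) ?_ (abs_nonneg _) (norm_nonneg _)
  simpa using abs_re_le_norm ((ρ : ℂ) - z)

section Integrals

variable {x δ : ℝ} {z : ℂ}

theorem norm_integral_inv_ofReal_sub_le (hre : z.re = x) (him : z.im ≠ 0) :
    ‖∫ ρ in (x - δ)..(x + δ), ((ρ : ℂ) - z)⁻¹‖ ≤ 2 * π := by
  have hderiv : ∀ ρ ∈ uIcc (x - δ) (x + δ),
      HasDerivAt (fun ρ : ℝ ↦ log ((ρ : ℂ) - z)) ((ρ : ℂ) - z)⁻¹ ρ := by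
    intro ρ _
    have hslit : (ρ : ℂ) - z ∈ slitPlane := Or.inr (by simpa using him)
    simpa using ((hasDerivAt_log hslit).comp (ρ : ℂ) ((hasDerivAt_id _).sub_const z)).comp_ofReal
  rw [integral_eq_sub_of_hasDerivAt hderiv ((continuous_inv_ofReal_sub him).intervalIntegrable _ _)]
  refine norm_log_sub_log_le_of_norm_eq ?_
  simp only [norm_def, normSq_apply, sub_re, sub_im, ofReal_re, ofReal_im, hre]
  ring_nf

theorem norm_integral_inv_ofReal_add_le (hx : 0 < x) (hδ : 0 ≤ δ) (hδx : δ ≤ x)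
    (hre : z.re = x) : ‖∫ ρ in (x - δ)..(x + δ), ((ρ : ℂ) + z)⁻¹‖ ≤ 2 * δ / x := by
  have hbound : ∀ ρ ∈ uIoc (x - δ) (x + δ), ‖((ρ : ℂ) + z)⁻¹‖ ≤ x⁻¹ := by
    intro ρ hρ
    rw [uIoc_of_le (by linarith)] at hρ
    rw [norm_inv]
    exact inv_anti₀ hx (hre ▸ re_le_norm_ofReal_add (hre ▸ hx.le) (by linarith [hρ.1]))
  convert norm_integral_le_of_norm_le_const hbound using 1
  rw [abs_of_nonneg (by linarith)]
  ring

theorem norm_integral_inv_ofReal_sq_sub_sq_le (hx : 0 < x) (hδ : 0 ≤ δ) (hδx : δ ≤ x)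
    (hre : z.re = x) (him : z.im ≠ 0) :
    ‖∫ ρ in (x - δ)..(x + δ), ((ρ : ℂ) ^ 2 - z ^ 2)⁻¹‖ ≤ (2 * π + 2 * δ / x) / (2 * x) := by
  have hz : 2 * x ≤ ‖2 * z‖ := by
    rw [norm_mul, Complex.norm_two, ← hre]
    linarith [abs_re_le_norm z, le_abs_self z.re]
  simp_rw [inv_ofReal_sq_sub_sq him]
  rw [intervalIntegral.integral_const_mul, integral_sub
    ((continuous_inv_ofReal_sub him).intervalIntegrable _ _)
    ((continuous_inv_ofReal_add him).intervalIntegrable _ _), norm_mul, norm_inv, inv_mul_eq_div]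
  gcongr
  calc _ ≤ _ := norm_sub_le _ _
    _ ≤ _ := add_le_add (norm_integral_inv_ofReal_sub_le hre him)
      (norm_integral_inv_ofReal_add_le hx hδ hδx hre)

theorem norm_integral_sub_div_ofReal_sq_sub_sq_le {f : ℝ → ℂ} {K : NNReal}
    (hf : LipschitzOnWith K f (Icc (x - δ) (x + δ))) (hx : 0 < x) (hδ : 0 ≤ δ) (hδx : δ ≤ x)
    (hre : z.re = x) (him : z.im ≠ 0) :
    ‖∫ ρ in (x - δ)..(x + δ), (f ρ - f x) / ((ρ : ℂ) ^ 2 - z ^ 2)‖ ≤ K / x * (2 * δ) := by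
  have hbound : ∀ ρ ∈ uIoc (x - δ) (x + δ), ‖(f ρ - f x) / ((ρ : ℂ) ^ 2 - z ^ 2)‖ ≤ K / x := by
    intro ρ hρ
    rw [uIoc_of_le (by linarith)] at hρ
    have hden := abs_sub_re_mul_re_le_norm_ofReal_sq_sub_sq (hre ▸ hx.le) (ρ := ρ)
      (by linarith [hρ.1])
    rw [hre] at hden
    rw [norm_div, div_le_iff₀ (norm_pos_iff.mpr (ofReal_sq_sub_sq_ne_zero_of_im_ne_zero him ρ))]
    calc ‖f ρ - f x‖ ≤ K * |ρ - x| :=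
          hf.norm_sub_le (Ioc_subset_Icc_self hρ) ⟨by linarith, by linarith⟩
      _ = K / x * (|ρ - x| * x) := by field_simp
      _ ≤ K / x * ‖(ρ : ℂ) ^ 2 - z ^ 2‖ := by gcongr
  convert norm_integral_le_of_norm_le_const hbound using 2
  rw [abs_of_nonneg (by linarith)]
  ring

end Integrals

end Complex

open Complex in
theorem uniform_bound_near_fermi_level (kF δ : ℝ) (hkF : 0 < kF) (hδ : 0 < δ)
    (hδkF : δ < kF) (f : ℝ → ℂ)
    (hf : ContDiffOn ℝ 1 f (Icc (kF - δ) (kF + δ))) :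
    ∃ C : ℝ, ∀ μ : ℝ, 0 < μ →
      ‖∫ ρ in (kF - δ)..(kF + δ),
          f ρ / ((ρ : ℂ) ^ 2 - ((kF : ℂ) + μ * Complex.I) ^ 2)‖ ≤ C := by
  obtain ⟨K, hK⟩ := hf.exists_lipschitzOnWith_of_isCompact (convex_Icc _ _) isCompact_Icc
    (uniqueDiffOn_Icc (by linarith))
  refine ⟨K / kF * (2 * δ) + ‖f kF‖ * ((2 * Real.pi + 2 * δ / kF) / (2 * kF)), fun μ hμ ↦ ?_⟩
  set z : ℂ := kF + μ * I
  have hre : z.re = kF := by simp [z]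
  have him : z.im ≠ 0 := by simpa [z] using hμ.ne'
  have hden : Continuous fun ρ : ℝ ↦ (ρ : ℂ) ^ 2 - z ^ 2 := by fun_prop
  have hden_ne := ofReal_sq_sub_sq_ne_zero_of_im_ne_zero him
  have hreg : IntervalIntegrable (fun ρ ↦ (f ρ - f kF) / ((ρ : ℂ) ^ 2 - z ^ 2)) volume
      (kF - δ) (kF + δ) := by
    refine ContinuousOn.intervalIntegrable ?_
    rw [uIcc_of_le (by linarith)]
    exact (hK.continuousOn.sub continuousOn_const).div hden.continuousOn fun ρ _ ↦ hden_ne ρ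
  have hsing : IntervalIntegrable (fun ρ : ℝ ↦ ((ρ : ℂ) ^ 2 - z ^ 2)⁻¹) volume (kF - δ) (kF + δ) :=
    (hden.inv₀ hden_ne).intervalIntegrable _ _
  have hsplit : ∀ ρ : ℝ, f ρ / ((ρ : ℂ) ^ 2 - z ^ 2)
      = (f ρ - f kF) / ((ρ : ℂ) ^ 2 - z ^ 2) + f kF * ((ρ : ℂ) ^ 2 - z ^ 2)⁻¹ := fun ρ ↦ by ring
  rw [integral_congr fun ρ _ ↦ hsplit ρ, integral_add hreg (hsing.const_mul _),
    intervalIntegral.integral_const_mul]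
  calc _ ≤ _ := norm_add_le _ _
    _ ≤ _ := by
      rw [norm_mul]
      gcongr
      · exact norm_integral_sub_div_ofReal_sq_sub_sq_le hK hkF hδ.le hδkF.le hre him
      · exact norm_integral_inv_ofReal_sq_sub_sq_le hkF hδ.le hδkF.le hre him
end

section
/- Let ℓ ≥ 0 and suppose (k, r) ↦ f_{k,ℓ}(r) is a family of solutions of the radial Schrödinger equation f'' + [k² − V(r) − ℓ(ℓ+1)/r²] f = 0 with f_{k,ℓ}(0) = 0, which is continuously differentiable in k. Then for every R > 0, (1/(2k)) [∂_k f_{k,ℓ}(R) · ∂_r f_{k,ℓ}(R) − f_{k,ℓ}(R) · ∂_k ∂_r f_{k,ℓ}(R)] = ∫_0^R |f_{k,ℓ}(r)|² dr. -/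
open MeasureTheory intervalIntegral Topology

/-!
For `q, k > 0` the Wronskian `W(r) = f_q(r) f_k'(r) - f_k(r) f_q'(r)` satisfies
`W' = (q² - k²) f_q f_k` (the potential and centrifugal terms cancel) and `W(0) = 0`, so
`W(R) = (q² - k²) ∫₀ᴿ f_q f_k`. Differentiating this identity in `q` at `q = k`, the right-hand
side contributes only `2k ∫₀ᴿ f_k²` because its first factor vanishes there, while the left-hand
side gives `∂_k f(R) ∂_r f(R) - f(R) ∂_k ∂_r f(R)`.
-/

theorem HasDerivAt.sub_mul_of_continuousAt {g I : ℝ → ℝ} {g' k : ℝ} (hg : HasDerivAt g g' k)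
    (hI : ContinuousAt I k) : HasDerivAt (fun q => (g q - g k) * I q) (g' * I k) k := by
  rw [hasDerivAt_iff_tendsto_slope] at hg ⊢
  refine (hg.mul (hI.tendsto.mono_left nhdsWithin_le_nhds)).congr' ?_
  filter_upwards with q
  simp only [slope_def_field, sub_self, zero_mul, sub_zero]
  ring

theorem wronskian_eq_integral_mul {u v U : ℝ → ℝ} {a b R : ℝ}
    (hu : ContDiff ℝ 2 u) (hv : ContDiff ℝ 2 v)
    (hu_ode : ∀ r ∈ Set.Ioo 0 R, deriv (deriv u) r + (a - U r) * u r = 0)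
    (hv_ode : ∀ r ∈ Set.Ioo 0 R, deriv (deriv v) r + (b - U r) * v r = 0)
    (hu0 : u 0 = 0) (hv0 : v 0 = 0) (hR : 0 ≤ R) :
    u R * deriv v R - v R * deriv u R = (a - b) * ∫ r in (0:ℝ)..R, u r * v r := by
  have hu' : ContDiff ℝ 1 (deriv u) := hu.deriv'
  have hv' : ContDiff ℝ 1 (deriv v) := hv.deriv'
  have hW : ∀ r ∈ Set.Ioo 0 R, HasDerivAt (fun r => u r * deriv v r - v r * deriv u r)
      ((a - b) * (u r * v r)) r := by
    intro r hr
    have hprod := ((hu.differentiable two_ne_zero r).hasDerivAt.mul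
      (hv'.differentiable one_ne_zero r).hasDerivAt).sub
      ((hv.differentiable two_ne_zero r).hasDerivAt.mul
      (hu'.differentiable one_ne_zero r).hasDerivAt)
    refine hprod.congr_deriv ?_
    linear_combination u r * hv_ode r hr - v r * hu_ode r hr
  have hFTC := integral_eq_sub_of_hasDerivAt_of_le hR
    ((hu.continuous.mul hv'.continuous).sub (hv.continuous.mul hu'.continuous)).continuousOn hW
    ((continuous_const.mul (hu.continuous.mul hv.continuous)).intervalIntegrable _ _)
  rw [← intervalIntegral.integral_const_mul, hFTC]
  simp [hu0, hv0]

theorem contDiff_deriv_apply_of_uncurry {f : ℝ → ℝ → ℝ} {n : WithTop ℕ∞}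
    (hf : ContDiff ℝ (n + 1) (Function.uncurry f)) (r : ℝ) :
    ContDiff ℝ n (fun q => deriv (f q) r) := by
  have hslice : ∀ q, deriv (f q) r = fderiv ℝ (Function.uncurry f) (q, r) (0, 1) := fun q =>
    ((hf.differentiable (by simp) (q, r)).hasFDerivAt.comp_hasDerivAt r
      ((hasDerivAt_const r q).prodMk (hasDerivAt_id r))).deriv
  simp only [hslice]
  exact ((hf.fderiv_right le_rfl).comp (contDiff_id.prodMk contDiff_const)).clm_apply
    contDiff_const

theorem normalization_integral_identity (ℓ : ℕ) (V : ℝ → ℝ)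
    (f : ℝ → ℝ → ℝ)  -- `f k r` is the radial solution `f_{k,ℓ}(r)`
    (hsmooth : ContDiff ℝ 2 (Function.uncurry f))
    (hode : ∀ k : ℝ, 0 < k → ∀ r : ℝ, 0 < r →
      deriv (deriv (f k)) r + (k ^ 2 - V r - ℓ * (ℓ + 1) / r ^ 2) * f k r = 0)
    (h0 : ∀ k : ℝ, f k 0 = 0) :
    ∀ k : ℝ, 0 < k → ∀ R : ℝ, 0 < R →
      (1 / (2 * k)) *
        (deriv (fun q => f q R) k * deriv (f k) R
          - f k R * deriv (fun q => deriv (f q) R) k)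
        = ∫ r in (0:ℝ)..R, |f k r| ^ 2 := by
  intro k hk R hR
  have hslice : ∀ q, ContDiff ℝ 2 (f q) := fun q =>
    hsmooth.comp (contDiff_const.prodMk contDiff_id)
  have hode' : ∀ q, 0 < q → ∀ r ∈ Set.Ioo 0 R,
      deriv (deriv (f q)) r + (q ^ 2 - (V r + ℓ * (ℓ + 1) / r ^ 2)) * f q r = 0 :=
    fun q hq r hr => by rw [← sub_sub]; exact hode q hq r hr.1
  set I : ℝ → ℝ := fun q => ∫ r in (0:ℝ)..R, f q r * f k r
  have hI : Continuous I := continuous_parametric_intervalIntegral_of_continuous'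
    (hsmooth.continuous.mul (hsmooth.continuous.comp (continuous_const.prodMk continuous_snd))) _ _
  have hW : (fun q => f q R * deriv (f k) R - f k R * deriv (f q) R)
      =ᶠ[𝓝 k] fun q => (q ^ 2 - k ^ 2) * I q := by
    filter_upwards [Ioi_mem_nhds hk] with q hq
    exact wronskian_eq_integral_mul (hslice q) (hslice k) (hode' q hq) (hode' k hk)
      (h0 q) (h0 k) hR.le
  have hderiv : HasDerivAt (fun q => f q R * deriv (f k) R - f k R * deriv (f q) R)
      (deriv (fun q => f q R) k * deriv (f k) R
        - f k R * deriv (fun q => deriv (f q) R) k) k :=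
    (((hsmooth.comp (contDiff_id.prodMk contDiff_const)).differentiable two_ne_zero
      k).hasDerivAt.mul_const _).sub
    (((contDiff_deriv_apply_of_uncurry hsmooth R).differentiable one_ne_zero
      k).hasDerivAt.const_mul _)
  have hquad : HasDerivAt (fun q => (q ^ 2 - k ^ 2) * I q) (2 * k * I k) k := by
    simpa using (hasDerivAt_pow 2 k).sub_mul_of_continuousAt hI.continuousAt
  rw [hderiv.unique (hquad.congr_of_eventuallyEq hW)]
  simp only [I, sq_abs, ← sq]
  field_simp
end
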